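/- (Inheritance structure of Schur complements of a positive Toeplitz operator.) Let T_Q = (Q_{i-j})_{i,j≥0} be a positive semidefinite Toeplitz operator on ℓ²_H(ℕ₀) and let S(m) denote the Schur complement of T_Q supported on rows and columns {0,…,m}. Then the lower-right m×m corner of S(m) (rows and columns 1,…,m) equals S(m-1); i.e., S(m) = [[A, B*],[B, S(m-1)]] for some operators A : H → H and B : H → H^m. -/

import Mathlib

/-!
The quadratic form of `S(m)` is the shorted form
`q_m(u) = inf {⟪T_Q w, w⟫ : w finitely supported, w = u on {0,…,m}}`.
One inequality is `T_Q - S(m) ≥ 0`. For the other, `q_m` is a nonnegative quadratic form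
obeying the parallelogram law, hence (Jordan–von Neumann) it has a sesquilinear polar form;
normalising the polar functional at `u` and representing it coordinatewise by Riesz vectors
gives a rank-one block matrix `X ≤ T_Q` with `⟪X u, u⟫ = q_m(u)`, and maximality of `S(m)`
gives `⟪S(m) u, u⟫ ≥ q_m(u)`.

Since `T_Q` is Toeplitz, prepending a zero coordinate identifies `q_{m+1}` on such vectors with
`q_m`, so the lower-right corner of `S(m+1)` and `S(m)` have the same quadratic form; both are
hermitian, so they agree entrywise.
-/

open scoped InnerProductSpace
open ContinuousLinearMap

section

variable {H : Type*} [NormedAddCommGroup H] [InnerProductSpace ℂ H] [CompleteSpace H]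

/-- The quadratic form of the block Toeplitz matrix `(Q_{i-j})_{i,j≥0}` on vectors
supported in `{0,…,N-1}`. -/
noncomputable def toepQF (Q : ℤ → H →L[ℂ] H) (N : ℕ) (v : ℕ → H) : ℝ :=
  ∑ i ∈ Finset.range N, ∑ j ∈ Finset.range N, (⟪Q ((i : ℤ) - (j : ℤ)) (v j), v i⟫_ℂ).re

/-- The block Toeplitz matrix `(Q_{i-j})_{i,j≥0}` is (hermitian and) positive
semidefinite on finitely supported sequences. -/
def ToepPos (Q : ℤ → H →L[ℂ] H) : Prop :=
  (∀ k : ℤ, Q (-k) = (Q k).adjoint) ∧ ∀ N v, 0 ≤ toepQF Q N v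

/-- The quadratic form of a block matrix supported on `{0,…,m} × {0,…,m}`. -/
noncomputable def schurQF (m : ℕ) (S : ℕ → ℕ → H →L[ℂ] H) (v : ℕ → H) : ℝ :=
  ∑ i ∈ Finset.range (m + 1), ∑ j ∈ Finset.range (m + 1), (⟪S i j (v j), v i⟫_ℂ).re

/-- `S` is the Schur complement `S(m)` of the positive Toeplitz operator `T_Q` supported
on rows and columns `{0,…,m}`: the maximal positive operator matrix supported there
with `T_Q - S ≥ 0`. -/
def IsSchurToep (Q : ℤ → H →L[ℂ] H) (m : ℕ) (S : ℕ → ℕ → H →L[ℂ] H) : Prop :=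
  (∀ i j, m < i ∨ m < j → S i j = 0) ∧ (∀ i j, (S i j).adjoint = S j i) ∧
    (∀ v, 0 ≤ schurQF m S v) ∧
    (∀ N (v : ℕ → H), (∀ k, N ≤ k → v k = 0) → schurQF m S v ≤ toepQF Q N v) ∧
    ∀ X : ℕ → ℕ → H →L[ℂ] H, (∀ i j, m < i ∨ m < j → X i j = 0) →
      (∀ i j, (X i j).adjoint = X j i) → (∀ v, 0 ≤ schurQF m X v) →
      (∀ N (v : ℕ → H), (∀ k, N ≤ k → v k = 0) → schurQF m X v ≤ toepQF Q N v) →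
      ∀ v, schurQF m X v ≤ schurQF m S v

end

open scoped ComplexConjugate

noncomputable section PositiveQuadratic

variable {V : Type*} [AddCommGroup V] [Module ℂ V]

structure IsPosQuadratic (q : V → ℝ) : Prop where
  nonneg : ∀ v, 0 ≤ q v
  smul : ∀ (c : ℂ) v, q (c • v) = ‖c‖ ^ 2 * q v
  parallelogram : ∀ v w, q (v + w) + q (v - w) = 2 * q v + 2 * q w

def realPolar (q : V → ℝ) (x y : V) : ℝ := (q (x + y) - q (x - y)) / 4

namespace IsPosQuadratic

variable {q : V → ℝ}

lemma map_zero (hq : IsPosQuadratic q) : q 0 = 0 := by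
  simpa using hq.smul 0 0

lemma map_neg (hq : IsPosQuadratic q) (v : V) : q (-v) = q v := by
  simpa using hq.smul (-1) v

lemma real_smul (hq : IsPosQuadratic q) (t : ℝ) (v : V) : q (t • v) = t ^ 2 * q v := by
  rw [← Complex.coe_smul, hq.smul, Complex.norm_real, Real.norm_eq_abs, sq_abs]

lemma map_add_eq (hq : IsPosQuadratic q) (x y : V) :
    q (x + y) = q x + q y + 2 * realPolar q x y := by
  unfold realPolar
  linarith [hq.parallelogram x y]

lemma realPolar_add_right (hq : IsPosQuadratic q) (x y z : V) :
    realPolar q x (y + z) = realPolar q x y + realPolar q x z := by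
  have double : ∀ y z, realPolar q (x + x) (y + z) = 2 * (realPolar q x y + realPolar q x z) := by
    intro y z
    have h₁ := hq.parallelogram (x + y) (x + z)
    have h₂ := hq.parallelogram (x - y) (x - z)
    rw [show x + y + (x + z) = x + x + (y + z) by abel, show x + y - (x + z) = y - z by abel]
      at h₁
    rw [show x - y + (x - z) = x + x - (y + z) by abel,
      show x - y - (x - z) = -(y - z) by abel, hq.map_neg] at h₂
    unfold realPolar
    linarith
  have h := double (y + z) 0
  rw [add_zero, double, show realPolar q x 0 = 0 by simp [realPolar]] at h
  linarith

def realPolarHom (hq : IsPosQuadratic q) (x : V) : V →+ ℝ :=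
  AddMonoidHom.mk' (realPolar q x) (hq.realPolar_add_right x)

lemma realPolar_sq_le (hq : IsPosQuadratic q) (x y : V) :
    realPolar q x y ^ 2 ≤ q x * q y := by
  have hrat (r : ℚ) : 0 ≤ q y * ((r : ℝ) * r) + 2 * realPolar q x y * r + q x := by
    have h := hq.map_add_eq x ((r : ℝ) • y)
    rw [hq.real_smul, show realPolar q x ((r : ℝ) • y) = r * realPolar q x y from
      map_ratCast_smul (hq.realPolarHom x) ℝ ℝ r y] at h
    nlinarith [hq.nonneg (x + (r : ℝ) • y)]
  have hreal (t : ℝ) : 0 ≤ q y * (t * t) + 2 * realPolar q x y * t + q x :=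
    Rat.denseRange_cast.induction_on t (isClosed_le continuous_const (by fun_prop)) hrat
  have := discrim_le_zero hreal
  unfold discrim at this
  nlinarith

lemma realPolar_real_smul (hq : IsPosQuadratic q) (x : V) (t : ℝ) (y : V) :
    realPolar q x (t • y) = t * realPolar q x y := by
  let g : ℝ →+ ℝ := (hq.realPolarHom x).comp ((smulAddHom ℝ V).flip y)
  have hg (s : ℝ) : g s = realPolar q x (s • y) := rfl
  -- Cauchy–Schwarz makes the additive map `g` Lipschitz, hence continuous, hence `ℝ`-linear.
  have hbound (s : ℝ) : ‖g s‖ ≤ √(q x * q y) * ‖s‖ := by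
    rw [hg, Real.norm_eq_abs, Real.norm_eq_abs, ← Real.sqrt_sq_eq_abs s, ← Real.sqrt_mul']
    · refine Real.abs_le_sqrt ((hq.realPolar_sq_le x (s • y)).trans_eq ?_)
      rw [hq.real_smul]
      ring
    · positivity
  simpa [hg] using map_real_smul g (AddMonoidHomClass.continuous_of_bound g _ hbound) t 1

def realPolarDual (hq : IsPosQuadratic q) (x : V) : Module.Dual ℝ V where
  toFun := realPolar q x
  map_add' := hq.realPolar_add_right x
  map_smul' := hq.realPolar_real_smul x

def complexPolar (hq : IsPosQuadratic q) (x : V) : Module.Dual ℂ V :=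
  (hq.realPolarDual x).extendRCLike

lemma complexPolar_self (hq : IsPosQuadratic q) (x : V) : hq.complexPolar x x = q x := by
  have hnorm : ‖1 + Complex.I‖ ^ 2 = ‖1 - Complex.I‖ ^ 2 := by
    simp [Complex.sq_norm, Complex.normSq_apply]
  have hI : realPolar q x (Complex.I • x) = 0 := by
    rw [realPolar, show x + Complex.I • x = (1 + Complex.I) • x by rw [add_smul, one_smul],
      show x - Complex.I • x = (1 - Complex.I) • x by rw [sub_smul, one_smul], hq.smul, hq.smul,
      hnorm]
    ring
  have hself : realPolar q x x = q x := by
    rw [realPolar, sub_self, hq.map_zero, ← two_smul ℝ x, hq.real_smul]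
    ring
  simp [complexPolar, Module.Dual.extendRCLike_apply, realPolarDual, hI, hself]

lemma norm_complexPolar_sq_le (hq : IsPosQuadratic q) (x y : V) :
    ‖hq.complexPolar x y‖ ^ 2 ≤ q x * q y := by
  set a := ‖hq.complexPolar x y‖ ^ 2
  -- rotating `y` by the phase of `complexPolar x y` reduces to the real Cauchy–Schwarz bound
  have hrot : a = realPolar q x (conj (hq.complexPolar x y) • y) :=
    Module.Dual.norm_extendRCLike_apply_sq _ y
  have hcs := hq.realPolar_sq_le x (conj (hq.complexPolar x y) • y)
  rw [← hrot, hq.smul, RCLike.norm_conj] at hcs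
  have ha : 0 ≤ a := by positivity
  nlinarith [hq.nonneg x, hq.nonneg y, mul_nonneg (hq.nonneg x) (hq.nonneg y)]

lemma exists_dual_norm_sq_le (hq : IsPosQuadratic q) (u : V) :
    ∃ L : Module.Dual ℂ V, (∀ y, ‖L y‖ ^ 2 ≤ q y) ∧ ‖L u‖ ^ 2 = q u := by
  have hscale (y : V) : ‖((((√(q u))⁻¹ : ℝ) : ℂ) • hq.complexPolar u) y‖ ^ 2 =
      (q u)⁻¹ * ‖hq.complexPolar u y‖ ^ 2 := by
    rw [LinearMap.smul_apply, norm_smul, mul_pow, Complex.norm_real, Real.norm_eq_abs, sq_abs,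
      inv_pow, Real.sq_sqrt (hq.nonneg u)]
  refine ⟨(((√(q u))⁻¹ : ℝ) : ℂ) • hq.complexPolar u, fun y => ?_, ?_⟩
  · rw [hscale]
    rcases (hq.nonneg u).eq_or_lt with hu | hu
    · simp [← hu, hq.nonneg y]
    · rw [inv_mul_le_iff₀ hu]
      exact hq.norm_complexPolar_sq_le u y
  · rw [hscale, hq.complexPolar_self, Complex.norm_real, Real.norm_eq_abs, sq_abs]
    rcases (hq.nonneg u).eq_or_lt with hu | hu
    · simp [← hu]
    · field_simp

end IsPosQuadratic

end PositiveQuadratic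

def consZero {α : Type*} [Zero α] (v : ℕ → α) : ℕ → α
  | 0 => 0
  | k + 1 => v k

@[simp] lemma consZero_zero {α : Type*} [Zero α] (v : ℕ → α) : consZero v 0 = 0 := rfl

@[simp] lemma consZero_succ {α : Type*} [Zero α] (v : ℕ → α) (k : ℕ) :
    consZero v (k + 1) = v k := rfl

lemma eq_consZero_of_apply_zero {α : Type*} [Zero α] {w : ℕ → α} (hw : w 0 = 0) :
    w = consZero fun k => w (k + 1) := by
  funext k
  cases k <;> simp [hw]

section Toeplitz

open Finset

variable {H : Type*} [NormedAddCommGroup H] [InnerProductSpace ℂ H] (Q : ℤ → H →L[ℂ] H)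

lemma toepQF_eq_of_le {N M : ℕ} (hNM : N ≤ M) {w : ℕ → H} (hw : ∀ k, N ≤ k → w k = 0) :
    toepQF Q M w = toepQF Q N w := by
  have hsub := range_subset_range.2 hNM
  refine (sum_subset hsub fun i _ hi => ?_).symm.trans ?_
  · simp [hw i (by simpa using hi)]
  · refine sum_congr rfl fun i _ => (sum_subset hsub fun j _ hj => ?_).symm
    simp [hw j (by simpa using hj)]

lemma toepQF_consZero (N : ℕ) (w : ℕ → H) : toepQF Q (N + 1) (consZero w) = toepQF Q N w := by
  simp only [toepQF, sum_range_succ', consZero_succ, consZero_zero, inner_zero_right, map_zero,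
    inner_zero_left, Complex.zero_re, sum_const_zero, add_zero]
  refine sum_congr rfl fun i _ => sum_congr rfl fun j _ => ?_
  push_cast
  ring_nf

lemma toepQF_parallelogram (N : ℕ) (v w : ℕ → H) :
    toepQF Q N (v + w) + toepQF Q N (v - w) = 2 * toepQF Q N v + 2 * toepQF Q N w := by
  simp only [toepQF, mul_sum, ← sum_add_distrib]
  refine sum_congr rfl fun i _ => sum_congr rfl fun j _ => ?_
  simp only [Pi.add_apply, Pi.sub_apply, map_add, map_sub, inner_add_left, inner_add_right,
    inner_sub_left, inner_sub_right, Complex.add_re, Complex.sub_re]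
  ring

lemma toepQF_smul (N : ℕ) (c : ℂ) (v : ℕ → H) :
    toepQF Q N (c • v) = ‖c‖ ^ 2 * toepQF Q N v := by
  simp only [toepQF, mul_sum]
  refine sum_congr rfl fun i _ => sum_congr rfl fun j _ => ?_
  rw [Pi.smul_apply, Pi.smul_apply, map_smul, inner_smul_left, inner_smul_right, ← mul_assoc,
    Complex.conj_mul', ← Complex.ofReal_pow, Complex.re_ofReal_mul]

lemma toepQF_single (i : ℕ) (h : H) :
    toepQF Q (i + 1) (Pi.single i h) = (⟪Q 0 h, h⟫_ℂ).re := by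
  unfold toepQF
  rw [sum_eq_single_of_mem i (by simp) fun a _ ha => by simp [ha],
    sum_eq_single_of_mem i (by simp) fun b _ hb => by simp [hb]]
  simp

noncomputable def toepExtensionValues (m : ℕ) (v : ℕ → H) : Set ℝ :=
  {r | ∃ N w, (∀ k ≤ m, w k = v k) ∧ (∀ k, N ≤ k → w k = 0) ∧ toepQF Q N w = r}

noncomputable def shortedQF (m : ℕ) (v : ℕ → H) : ℝ := sInf (toepExtensionValues Q m v)

variable {Q}

lemma shortedQF_le (hQ : ∀ N v, 0 ≤ toepQF Q N v) {m N : ℕ} {v w : ℕ → H} (hw : ∀ k ≤ m, w k = v k)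
    (hN : ∀ k, N ≤ k → w k = 0) : shortedQF Q m v ≤ toepQF Q N w :=
  csInf_le ⟨0, by rintro _ ⟨N, w, -, -, rfl⟩; exact hQ N w⟩ ⟨N, w, hw, hN, rfl⟩

lemma le_shortedQF {m : ℕ} {v : ℕ → H} {c : ℝ}
    (h : ∀ N w, (∀ k ≤ m, w k = v k) → (∀ k, N ≤ k → w k = 0) → c ≤ toepQF Q N w) :
    c ≤ shortedQF Q m v := by
  refine le_csInf ⟨_, m + 1, fun k => if k ≤ m then v k else 0, fun k hk => if_pos hk,
    fun k hk => if_neg (by omega), rfl⟩ ?_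
  rintro _ ⟨N, w, hw, hN, rfl⟩
  exact h N w hw hN

lemma shortedQF_nonneg (hQ : ∀ N v, 0 ≤ toepQF Q N v) (m : ℕ) (v : ℕ → H) : 0 ≤ shortedQF Q m v :=
  le_shortedQF fun N w _ _ => hQ N w

lemma shortedQF_congr {m : ℕ} {v v' : ℕ → H} (h : ∀ k ≤ m, v k = v' k) :
    shortedQF Q m v = shortedQF Q m v' := by
  have hext (w : ℕ → H) : (∀ k ≤ m, w k = v k) ↔ ∀ k ≤ m, w k = v' k :=
    forall₂_congr fun k hk => by rw [h k hk]
  simp only [shortedQF, toepExtensionValues, hext]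

lemma shortedQF_smul_le (hQ : ∀ N v, 0 ≤ toepQF Q N v) (m : ℕ) (c : ℂ) (v : ℕ → H) :
    shortedQF Q m (c • v) ≤ ‖c‖ ^ 2 * shortedQF Q m v := by
  rcases eq_or_ne c 0 with rfl | hc
  · simpa [toepQF] using shortedQF_le hQ (m := m) (N := 0) (v := (0 : ℂ) • v) (w := 0)
      (fun k _ => by simp) (fun k _ => rfl)
  · have hc2 : 0 < ‖c‖ ^ 2 := by positivity
    rw [← div_le_iff₀' hc2]
    refine le_shortedQF fun N w hw hN => ?_
    rw [div_le_iff₀' hc2, ← toepQF_smul]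
    exact shortedQF_le hQ (fun k hk => by simp [hw k hk]) (fun k hk => by simp [hN k hk])

lemma shortedQF_smul (hQ : ∀ N v, 0 ≤ toepQF Q N v) (m : ℕ) (c : ℂ) (v : ℕ → H) :
    shortedQF Q m (c • v) = ‖c‖ ^ 2 * shortedQF Q m v := by
  refine le_antisymm (shortedQF_smul_le hQ m c v) ?_
  rcases eq_or_ne c 0 with rfl | hc
  · simpa using shortedQF_nonneg hQ m _
  · have h := shortedQF_smul_le hQ m c⁻¹ (c • v)
    rw [smul_smul, inv_mul_cancel₀ hc, one_smul, norm_inv, inv_pow] at h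
    rwa [le_inv_mul_iff₀ (by positivity)] at h

lemma shortedQF_parallelogram_le (hQ : ∀ N v, 0 ≤ toepQF Q N v) (m : ℕ) (v w : ℕ → H) :
    shortedQF Q m (v + w) + shortedQF Q m (v - w) ≤ 2 * shortedQF Q m v + 2 * shortedQF Q m w := by
  set lhs := shortedQF Q m (v + w) + shortedQF Q m (v - w)
  have hext : ∀ N a, (∀ k ≤ m, a k = v k) → (∀ k, N ≤ k → a k = 0) →
      ∀ M b, (∀ k ≤ m, b k = w k) → (∀ k, M ≤ k → b k = 0) →
      lhs ≤ 2 * toepQF Q N a + 2 * toepQF Q M b := by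
    intro N a ha haN M b hb hbM
    have haK : ∀ k, max N M ≤ k → a k = 0 := fun k hk => haN k (le_of_max_le_left hk)
    have hbK : ∀ k, max N M ≤ k → b k = 0 := fun k hk => hbM k (le_of_max_le_right hk)
    rw [← toepQF_eq_of_le Q (le_max_left N M) haN, ← toepQF_eq_of_le Q (le_max_right N M) hbM,
      ← toepQF_parallelogram]
    exact add_le_add
      (shortedQF_le hQ (fun k hk => by simp [ha k hk, hb k hk])
        (fun k hk => by simp [haK k hk, hbK k hk]))
      (shortedQF_le hQ (fun k hk => by simp [ha k hk, hb k hk])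
        (fun k hk => by simp [haK k hk, hbK k hk]))
  have hv : ∀ M b, (∀ k ≤ m, b k = w k) → (∀ k, M ≤ k → b k = 0) →
      (lhs - 2 * toepQF Q M b) / 2 ≤ shortedQF Q m v := fun M b hb hbM =>
    le_shortedQF fun N a ha haN => by linarith [hext N a ha haN M b hb hbM]
  have hw : (lhs - 2 * shortedQF Q m v) / 2 ≤ shortedQF Q m w :=
    le_shortedQF fun M b hb hbM => by linarith [hv M b hb hbM]
  linarith

lemma isPosQuadratic_shortedQF (hQ : ∀ N v, 0 ≤ toepQF Q N v) (m : ℕ) :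
    IsPosQuadratic (shortedQF Q m) where
  nonneg := shortedQF_nonneg hQ m
  smul := shortedQF_smul hQ m
  parallelogram v w := by
    refine le_antisymm (shortedQF_parallelogram_le hQ m v w) ?_
    have h := shortedQF_parallelogram_le hQ m (v + w) (v - w)
    rw [show v + w + (v - w) = (2 : ℂ) • v by rw [two_smul]; abel,
      show v + w - (v - w) = (2 : ℂ) • w by rw [two_smul]; abel, shortedQF_smul hQ,
      shortedQF_smul hQ] at h
    norm_num at h
    linarith

lemma shortedQF_consZero (hQ : ∀ N v, 0 ≤ toepQF Q N v) (m : ℕ) (v : ℕ → H) :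
    shortedQF Q (m + 1) (consZero v) = shortedQF Q m v := by
  refine le_antisymm (le_shortedQF fun N w hw hN => ?_) (le_shortedQF fun N w hw hN => ?_)
  · rw [← toepQF_consZero]
    refine shortedQF_le hQ (fun k hk => ?_) (fun k hk => ?_)
    · cases k with
      | zero => rfl
      | succ k => exact hw k (by omega)
    · cases k with
      | zero => omega
      | succ k => exact hN k (by omega)
  · have hw0 : w 0 = 0 := hw 0 (Nat.zero_le _)
    rw [← toepQF_eq_of_le Q N.le_succ hN, eq_consZero_of_apply_zero hw0, toepQF_consZero]
    exact shortedQF_le hQ (fun k hk => hw (k + 1) (by omega)) (fun k hk => hN (k + 1) (by omega))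

lemma shortedQF_single_le (hQ : ∀ N v, 0 ≤ toepQF Q N v) (m i : ℕ) (h : H) :
    shortedQF Q m (Pi.single i h) ≤ ‖Q 0‖ * ‖h‖ ^ 2 := by
  refine (shortedQF_le hQ (N := i + 1) (fun k _ => rfl) fun k hk => ?_).trans ?_
  · exact Pi.single_eq_of_ne (by omega : k ≠ i) (M := fun _ => H) h
  · rw [toepQF_single, sq, ← mul_assoc]
    exact (Complex.re_le_norm _).trans ((norm_inner_le_norm _ _).trans
      (mul_le_mul_of_nonneg_right ((Q 0).le_opNorm h) (norm_nonneg h)))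

end Toeplitz

section BlockMatrix

open Finset InnerProductSpace

variable {H : Type*} [NormedAddCommGroup H] [InnerProductSpace ℂ H]

lemma schurQF_congr {m : ℕ} (S : ℕ → ℕ → H →L[ℂ] H) {v v' : ℕ → H}
    (h : ∀ k ≤ m, v k = v' k) : schurQF m S v = schurQF m S v' := by
  unfold schurQF
  refine sum_congr rfl fun i hi => sum_congr rfl fun j hj => ?_
  rw [h i (Nat.lt_succ_iff.1 (mem_range.1 hi)), h j (Nat.lt_succ_iff.1 (mem_range.1 hj))]

lemma schurQF_consZero (m : ℕ) (S : ℕ → ℕ → H →L[ℂ] H) (v : ℕ → H) :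
    schurQF (m + 1) S (consZero v) = schurQF m (fun i j => S (i + 1) (j + 1)) v := by
  simp only [schurQF, sum_range_succ', consZero_succ, consZero_zero, inner_zero_right, map_zero,
    inner_zero_left, Complex.zero_re, sum_const_zero, add_zero]

lemma schurQF_rankOne (m : ℕ) (ξ v : ℕ → H) :
    schurQF m (fun i j => rankOne ℂ (ξ i) (ξ j)) v = ‖∑ i ∈ range (m + 1), ⟪ξ i, v i⟫_ℂ‖ ^ 2 := by
  rw [← Complex.ofReal_re (_ ^ 2), Complex.ofReal_pow, ← Complex.mul_conj', map_sum, sum_mul_sum,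
    Complex.re_sum, schurQF]
  refine sum_congr rfl fun i _ => ?_
  rw [Complex.re_sum]
  refine sum_congr rfl fun j _ => ?_
  rw [rankOne_apply, inner_smul_left, mul_comm]

noncomputable def schurBilin (m : ℕ) (S : ℕ → ℕ → H →L[ℂ] H) (v w : ℕ → H) : ℝ :=
  ∑ i ∈ range (m + 1), ∑ j ∈ range (m + 1), (⟪S i j (w j), v i⟫_ℂ).re

lemma schurBilin_single {m i j : ℕ} (hi : i ≤ m) (hj : j ≤ m) (S : ℕ → ℕ → H →L[ℂ] H)
    (a b : H) : schurBilin m S (Pi.single i a) (Pi.single j b) = (⟪S i j b, a⟫_ℂ).re := by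
  unfold schurBilin
  rw [sum_eq_single_of_mem i (by simpa [Nat.lt_succ_iff]) fun k _ hk => by simp [hk],
    sum_eq_single_of_mem j (by simpa [Nat.lt_succ_iff]) fun l _ hl => by simp [hl]]
  simp

variable [CompleteSpace H]

lemma schurBilin_comm {m : ℕ} {S : ℕ → ℕ → H →L[ℂ] H} (hS : ∀ i j, (S i j).adjoint = S j i)
    (v w : ℕ → H) : schurBilin m S v w = schurBilin m S w v := by
  unfold schurBilin
  rw [sum_comm]
  refine sum_congr rfl fun i _ => sum_congr rfl fun j _ => ?_
  rw [← adjoint_inner_right, hS, ← inner_conj_symm, Complex.conj_re]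

lemma schurQF_add {m : ℕ} {S : ℕ → ℕ → H →L[ℂ] H} (hS : ∀ i j, (S i j).adjoint = S j i)
    (v w : ℕ → H) :
    schurQF m S (v + w) = schurQF m S v + schurQF m S w + 2 * schurBilin m S v w := by
  rw [two_mul]
  nth_rw 2 [schurBilin_comm hS]
  simp only [schurQF, schurBilin, ← sum_add_distrib]
  refine sum_congr rfl fun i _ => sum_congr rfl fun j _ => ?_
  simp only [Pi.add_apply, map_add, inner_add_left, inner_add_right, Complex.add_re]
  ring

lemma entry_eq_of_schurQF_eq {m : ℕ} {A B : ℕ → ℕ → H →L[ℂ] H}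
    (hA : ∀ i j, (A i j).adjoint = A j i) (hB : ∀ i j, (B i j).adjoint = B j i)
    (h : ∀ v, schurQF m A v = schurQF m B v) {i j : ℕ} (hi : i ≤ m) (hj : j ≤ m) :
    A i j = B i j := by
  have hbilin (v w : ℕ → H) : schurBilin m A v w = schurBilin m B v w := by
    linarith [schurQF_add (m := m) hA v w, schurQF_add (m := m) hB v w, h v, h w, h (v + w)]
  ext b
  have hb := hbilin (Pi.single i (A i j b - B i j b)) (Pi.single j b)
  rw [schurBilin_single hi hj, schurBilin_single hi hj, ← sub_eq_zero, ← Complex.sub_re,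
    ← inner_sub_left] at hb
  have hnorm : ‖A i j b - B i j b‖ ^ 2 = 0 := by
    rw [← inner_self_eq_norm_sq (𝕜 := ℂ)]
    exact hb
  rwa [sq_eq_zero_iff, norm_eq_zero, sub_eq_zero] at hnorm

lemma exists_inner_eq_dual_single (L : Module.Dual ℂ (ℕ → H)) {C : ℝ}
    (hL : ∀ i h, ‖L (Pi.single i h)‖ ≤ C * ‖h‖) (m : ℕ) :
    ∃ ξ : ℕ → H, (∀ i, m < i → ξ i = 0) ∧
      ∀ v : ℕ → H,
        ∑ i ∈ range (m + 1), ⟪ξ i, v i⟫_ℂ = L (∑ i ∈ range (m + 1), Pi.single i (v i)) := by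
  let φ (i : ℕ) : StrongDual ℂ H := (L ∘ₗ LinearMap.single ℂ (fun _ => H) i).mkContinuous C (hL i)
  refine ⟨fun i => if i ≤ m then (toDual ℂ H).symm (φ i) else 0, fun i hi => if_neg (by omega),
    fun v => ?_⟩
  rw [map_sum]
  refine sum_congr rfl fun i hi => ?_
  simp only [if_pos (Nat.lt_succ_iff.1 (mem_range.1 hi)), toDual_symm_apply]
  rfl

lemma IsSchurToep.schurQF_eq_shortedQF {Q : ℤ → H →L[ℂ] H} (hQ : ∀ N v, 0 ≤ toepQF Q N v)
    {m : ℕ} {S : ℕ → ℕ → H →L[ℂ] H} (hS : IsSchurToep Q m S) (u : ℕ → H) :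
    schurQF m S u = shortedQF Q m u := by
  obtain ⟨-, -, -, hdom, hmax⟩ := hS
  refine le_antisymm (le_shortedQF fun N w hw hN => ?_) ?_
  · rw [schurQF_congr S fun k hk => (hw k hk).symm]
    exact hdom N w hN
  set trunc : (ℕ → H) → ℕ → H := fun v => ∑ i ∈ range (m + 1), Pi.single i (v i)
  have htrunc (v : ℕ → H) : ∀ k ≤ m, trunc v k = v k := fun k hk => by
    simp [trunc, Finset.sum_apply, Finset.sum_pi_single, hk]
  obtain ⟨L, hL, hLu⟩ := (isPosQuadratic_shortedQF hQ m).exists_dual_norm_sq_le (trunc u)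
  have hLsingle (i : ℕ) (h : H) : ‖L (Pi.single i h)‖ ≤ √‖Q 0‖ * ‖h‖ := by
    rw [← Real.sqrt_sq (norm_nonneg h), ← Real.sqrt_mul (norm_nonneg _),
      Real.le_sqrt (norm_nonneg _) (by positivity)]
    exact (hL _).trans (shortedQF_single_le hQ m i h)
  obtain ⟨ξ, hξ0, hξ⟩ := exists_inner_eq_dual_single L hLsingle m
  -- The rank-one block matrix `|L|²` is a competitor in the maximality defining `S(m)`.
  have hX (v : ℕ → H) :
      schurQF m (fun i j => rankOne ℂ (ξ i) (ξ j)) v = ‖L (trunc v)‖ ^ 2 := by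
    rw [schurQF_rankOne, hξ]
  have hXS := hmax (fun i j => rankOne ℂ (ξ i) (ξ j))
    (fun i j hij => by rcases hij with h | h <;> simp [hξ0 _ h])
    (fun i j => adjoint_rankOne _ _) (fun v => hX v ▸ sq_nonneg _)
    (fun N v hN => (hX v).trans_le
      ((hL _).trans (shortedQF_le hQ (fun k hk => (htrunc v k hk).symm) hN))) u
  calc shortedQF Q m u = shortedQF Q m (trunc u) := shortedQF_congr fun k hk => (htrunc u k hk).symm
    _ = schurQF m (fun i j => rankOne ℂ (ξ i) (ξ j)) u := by rw [hX, hLu]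
    _ ≤ schurQF m S u := hXS

end BlockMatrix

variable {H : Type*} [NormedAddCommGroup H] [InnerProductSpace ℂ H] [CompleteSpace H]

/-- Inheritance structure: the lower-right corner of `S(m)` is `S(m-1)`. -/
theorem schur_toeplitz_inheritance (Q : ℤ → H →L[ℂ] H) (hQ : ToepPos Q)
    (m : ℕ) (hm : 1 ≤ m) (S S' : ℕ → ℕ → H →L[ℂ] H)
    (hS : IsSchurToep Q m S) (hS' : IsSchurToep Q (m - 1) S') :
    ∀ i j : ℕ, S (i + 1) (j + 1) = S' i j := by
  obtain ⟨n, rfl⟩ : ∃ n, m = n + 1 := ⟨m - 1, by omega⟩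
  rw [Nat.add_sub_cancel] at hS'
  have hforms (v : ℕ → H) :
      schurQF n (fun i j => S (i + 1) (j + 1)) v = schurQF n S' v := by
    rw [← schurQF_consZero, hS.schurQF_eq_shortedQF hQ.2, shortedQF_consZero hQ.2,
      hS'.schurQF_eq_shortedQF hQ.2]
  intro i j
  by_cases hij : i ≤ n ∧ j ≤ n
  · exact entry_eq_of_schurQF_eq (fun i j => hS.2.1 _ _) hS'.2.1 hforms hij.1 hij.2
  · rw [hS.1 _ _ (by omega), hS'.1 _ _ (by omega)]
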